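/- Let H be a group and let J₁, …, J_k be finitely many subgroups of H, none of which is virtually abelian. Let {ρₙ : H → PSL(2,ℂ)} be a sequence of discrete and faithful representations, and suppose that for each i there is a sequence {gₙ^i} in PSL(2,ℂ) such that {ρₙ^{gₙ^i}|_{J_i}} converges pointwise to a discrete and faithful representation of J_i. Suppose moreover that for each pair i, j there exist hₙ ∈ H and a compact subset K_{ij} of PSL(2,ℂ) with gₙ^i ρₙ(hₙ) (gₙ^j)⁻¹ ∈ K_{ij} for all n. Then there is a single sequence {gₙ} in PSL(2,ℂ) such that, after passing to a subsequence, {ρₙ^{gₙ}} converges up to inner automorphism on each J_i (i.e. for each i there exist hₙ^i ∈ H such that {(ρₙ^{gₙ}) ∘ I_{hₙ^i}|_{J_i}} converges pointwise to a discrete and faithful representation of J_i); moreover, for each i there exist h̃ₙ ∈ H and a compact set with {gₙ ρₙ(h̃ₙ) (gₙ^i)⁻¹} contained in it. -/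

import Mathlib

open Matrix Filter Topology

/-- `SL(2,ℂ)`. -/
abbrev SL2C := Matrix.SpecialLinearGroup (Fin 2) ℂ

/-- The topology on `SL(2,ℂ)` induced from the matrix topology. -/
noncomputable instance : TopologicalSpace SL2C :=
  TopologicalSpace.induced (fun A => (A : Matrix (Fin 2) (Fin 2) ℂ)) inferInstance

/-- `PSL(2,ℂ) = SL(2,ℂ)/{±I}`, with the quotient topology. -/
abbrev PSL2C := Matrix.ProjectiveSpecialLinearGroup (Fin 2) ℂ

/-- A representation into `PSL(2,ℂ)` is discrete and faithful if it is injective and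
its image is a discrete subgroup. -/
def IsDiscreteFaithful {G : Type*} [Group G] (ρ : G →* PSL2C) : Prop :=
  Function.Injective ρ ∧ DiscreteTopology ρ.range

/-- A group is virtually abelian if it has an abelian subgroup of finite index. -/
def VirtuallyAbelian (G : Type*) [Group G] : Prop :=
  ∃ A : Subgroup G, IsMulCommutative A ∧ A.FiniteIndex

/-- The conjugate representation `ρ^g : h ↦ g ρ(h) g⁻¹`. -/
def conjRep {G : Type*} [Group G] (g : PSL2C) (ρ : G →* PSL2C) : G →* PSL2C :=
  (MulAut.conj g).toMonoidHom.comp ρ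

/-- Pointwise convergence of a sequence of representations into `PSL(2,ℂ)`. -/
def TendstoRep {G : Type*} [Group G] (ρs : ℕ → G →* PSL2C) (ρ : G →* PSL2C) : Prop :=
  ∀ g : G, Tendsto (fun n => ρs n g) atTop (𝓝 (ρ g))

/-! Fix an index `i₀` and take `gₙ := gₙ^{i₀}`. The elements `cₙ^i := gₙ^{i₀} ρₙ(hₙ^i) (gₙ^i)⁻¹`
lie in compact sets, so along a subsequence they converge, say to `aᵢ`. Since
`ρₙ^{gₙ} ∘ I_{hₙ^i} = (ρₙ^{gₙ^i})^{cₙ^i}`, the restriction to `J_i` converges to `σᵢ^{aᵢ}`, which is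
again discrete and faithful. -/

instance : IsTopologicalGroup SL2C := Matrix.SpecialLinearGroup.topologicalGroup

instance : FirstCountableTopology (Matrix (Fin 2) (Fin 2) ℂ) :=
  inferInstanceAs (FirstCountableTopology (Fin 2 → Fin 2 → ℂ))

instance : FirstCountableTopology SL2C :=
  TopologicalSpace.firstCountableTopology_induced _ _ _

section

variable {G : Type*} [Group G]

lemma conjRep_apply (g : PSL2C) (ρ : G →* PSL2C) (x : G) :
    conjRep g ρ x = g * ρ x * g⁻¹ :=
  rfl

lemma IsDiscreteFaithful.conjRep {σ : G →* PSL2C} (hσ : IsDiscreteFaithful σ) (c : PSL2C) :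
    IsDiscreteFaithful (_root_.conjRep c σ) := by
  obtain ⟨hinj, hdisc⟩ := hσ
  refine ⟨(MulAut.conj c).injective.comp hinj, ?_⟩
  let e : PSL2C ≃ₜ PSL2C := (Homeomorph.mulLeft c).trans (Homeomorph.mulRight c⁻¹)
  have hrange : ((_root_.conjRep c σ).range : Set PSL2C) = e '' σ.range := by
    rw [_root_.conjRep, MonoidHom.range_comp]
    rfl
  have := (e.image σ.range).symm.isEmbedding.discreteTopology
  rwa [← hrange] at this

lemma conjRep_comp_conj (g g' : PSL2C) (ρ : G →* PSL2C) (h : G) :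
    (conjRep g ρ).comp (MulAut.conj h).toMonoidHom = conjRep (g * ρ h * g'⁻¹) (conjRep g' ρ) := by
  ext x
  simp only [MonoidHom.comp_apply, MulEquiv.coe_toMonoidHom, MulAut.conj_apply, conjRep_apply,
    map_mul, map_inv]
  group

lemma TendstoRep.comp_strictMono {ρs : ℕ → G →* PSL2C} {σ : G →* PSL2C} (hρ : TendstoRep ρs σ)
    {φ : ℕ → ℕ} (hφ : StrictMono φ) : TendstoRep (fun n => ρs (φ n)) σ :=
  fun x => (hρ x).comp hφ.tendsto_atTop

lemma TendstoRep.conjRep {ρs : ℕ → G →* PSL2C} {σ : G →* PSL2C} (hρ : TendstoRep ρs σ)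
    {c : ℕ → PSL2C} {a : PSL2C} (hc : Tendsto c atTop (𝓝 a)) :
    TendstoRep (fun n => _root_.conjRep (c n) (ρs n)) (_root_.conjRep a σ) :=
  fun x => (hc.mul (hρ x)).mul hc.inv

end

theorem common_conjugating_sequence_general {H : Type*} [Group H] {k : ℕ}
    (J : Fin k → Subgroup H)
    (ρs : ℕ → H →* PSL2C)
    (g' : Fin k → ℕ → PSL2C) (σ : ∀ i, (J i : Subgroup H) →* PSL2C)
    (hσ : ∀ i, IsDiscreteFaithful (σ i))
    (hconv : ∀ i, TendstoRep
      (fun n => (conjRep (g' i n) (ρs n)).comp (J i).subtype) (σ i))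
    (hpair : ∀ i j : Fin k, ∃ (h : ℕ → H) (K : Set PSL2C), IsCompact K ∧
      ∀ n, g' i n * ρs n (h n) * (g' j n)⁻¹ ∈ K) :
    ∃ g : ℕ → PSL2C,
      (∃ φ : ℕ → ℕ, StrictMono φ ∧
        ∀ i, ∃ (h : ℕ → H) (σ' : (J i : Subgroup H) →* PSL2C),
          IsDiscreteFaithful σ' ∧
          TendstoRep (fun n =>
            ((conjRep (g (φ n)) (ρs (φ n))).comp
              (MulAut.conj (h n)).toMonoidHom).comp (J i).subtype) σ') ∧
      ∀ i, ∃ (h : ℕ → H) (K : Set PSL2C), IsCompact K ∧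
        ∀ n, g n * ρs n (h n) * (g' i n)⁻¹ ∈ K := by
  rcases isEmpty_or_nonempty (Fin k) with hempty | ⟨⟨i₀⟩⟩
  · exact ⟨fun _ => 1, ⟨id, strictMono_id, isEmptyElim⟩, isEmptyElim⟩
  choose h K hK hmem using hpair i₀
  obtain ⟨a, -, φ, hφ, hlim⟩ := (isCompact_univ_pi hK).tendsto_subseq
    (x := fun n i => g' i₀ n * ρs n (h i n) * (g' i n)⁻¹) fun n i _ => hmem i n
  refine ⟨g' i₀, ⟨φ, hφ, fun i => ?_⟩, fun i => ⟨h i, K i, hK i, hmem i⟩⟩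
  refine ⟨fun n => h i (φ n), conjRep (a i) (σ i), (hσ i).conjRep (a i), fun x => ?_⟩
  refine (((hconv i).comp_strictMono hφ).conjRep (tendsto_pi_nhds.1 hlim i) x).congr fun n => ?_
  dsimp only [Function.comp_apply]
  rw [conjRep_comp_conj _ (g' i (φ n))]
  rfl

/-- Lemma "basepoints and limits". Let `J₁, …, J_k` be nonelementary
subgroups of `H` and suppose `{ρₙ}` converges up to conjugacy on each `J_i`, with conjugating
sequences `{gₙ^i}`, and that for each pair `i, j` the sequence `{gₙ^i ρₙ(hₙ) (gₙ^j)⁻¹}` lies in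
a compact set for suitable `hₙ ∈ H`. Then there is a single conjugating sequence `{gₙ}` such
that, after passing to a subsequence, `{ρₙ^{gₙ}}` converges up to inner automorphism on each
`J_i`; moreover `{gₙ ρₙ(h̃ₙ) (gₙ^i)⁻¹}` lies in a compact set for suitable `h̃ₙ ∈ H`. -/
theorem common_conjugating_sequence {H : Type*} [Group H] {k : ℕ}
    (J : Fin k → Subgroup H) (hJ : ∀ i, ¬ VirtuallyAbelian (J i))
    (ρs : ℕ → H →* PSL2C) (hρs : ∀ n, IsDiscreteFaithful (ρs n))
    (g' : Fin k → ℕ → PSL2C) (σ : ∀ i, (J i : Subgroup H) →* PSL2C)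
    (hσ : ∀ i, IsDiscreteFaithful (σ i))
    (hconv : ∀ i, TendstoRep
      (fun n => (conjRep (g' i n) (ρs n)).comp (J i).subtype) (σ i))
    (hpair : ∀ i j : Fin k, ∃ (h : ℕ → H) (K : Set PSL2C), IsCompact K ∧
      ∀ n, g' i n * ρs n (h n) * (g' j n)⁻¹ ∈ K) :
    ∃ g : ℕ → PSL2C,
      (∃ φ : ℕ → ℕ, StrictMono φ ∧
        ∀ i, ∃ (h : ℕ → H) (σ' : (J i : Subgroup H) →* PSL2C),
          IsDiscreteFaithful σ' ∧
          TendstoRep (fun n =>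
            ((conjRep (g (φ n)) (ρs (φ n))).comp
              (MulAut.conj (h n)).toMonoidHom).comp (J i).subtype) σ') ∧
      ∀ i, ∃ (h : ℕ → H) (K : Set PSL2C), IsCompact K ∧
        ∀ n, g n * ρs n (h n) * (g' i n)⁻¹ ∈ K :=
  common_conjugating_sequence_general J ρs g' σ hσ hconv hpair
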